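/- Let M be a probability measure on a measure space and f a nonnegative integrable function with the same total mass as M (∫f = ∫dM = 1). Then the relative entropy H(f|M) = ∫ f log(f/M) satisfies 0 ≤ H(f|M) ≤ ‖f/M^{1/2}‖_{L²} · ‖f/M^{1/2} − M^{1/2}‖_{L²}, provided f/M^{1/2} ∈ L². -/

import Mathlib

/-!
Both bounds come from comparing `x log (x / y)` with its tangent-line bounds
`x - y ≤ x log (x / y) ≤ x² / y - x` (from `1 - 1/t ≤ log t ≤ t - 1`). Integrated against `μ`,
with `∫ f = ∫ M = 1`, they give `0 ≤ H(f|M) ≤ ∫ f² / M - 1`, and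
`∫ f² / M - 1 = ‖f/√M - √M‖²` is at most `‖f/√M‖ ‖f/√M - √M‖` since `‖f/√M‖² = ∫ f² / M`.
-/

open MeasureTheory

namespace Real

theorem sub_le_mul_log_div {x y : ℝ} (hx : 0 ≤ x) (hy : 0 < y) : x - y ≤ x * log (x / y) := by
  rcases hx.eq_or_lt with rfl | hx
  · simpa using hy.le
  have hlog := one_sub_inv_le_log_of_pos (div_pos hx hy)
  calc x - y = x * (1 - (x / y)⁻¹) := by field_simp
    _ ≤ x * log (x / y) := mul_le_mul_of_nonneg_left hlog hx.le

theorem mul_log_div_le {x y : ℝ} (hx : 0 ≤ x) (hy : 0 < y) : x * log (x / y) ≤ x ^ 2 / y - x := by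
  rcases hx.eq_or_lt with rfl | hx
  · simp
  calc x * log (x / y) ≤ x * (x / y - 1) :=
        mul_le_mul_of_nonneg_left (log_le_sub_one_of_pos (div_pos hx hy)) hx.le
    _ = x ^ 2 / y - x := by ring

theorem le_sqrt_mul_sqrt_of_le {a s t : ℝ} (ha : a ≤ t) (ht : 0 ≤ t) (hts : t ≤ s) :
    a ≤ √s * √t :=
  calc a ≤ t := ha
    _ = √t * √t := (mul_self_sqrt ht).symm
    _ ≤ √s * √t := mul_le_mul_of_nonneg_right (sqrt_le_sqrt hts) (sqrt_nonneg t)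

end Real

section RelativeEntropy

variable {Ω : Type*} [MeasurableSpace Ω] {μ : Measure Ω} {M f : Ω → ℝ}

theorem integral_mul_log_div_nonneg (hMpos : ∀ᵐ ω ∂μ, 0 < M ω) (hf0 : ∀ᵐ ω ∂μ, 0 ≤ f ω)
    (hfM : ∫ ω, f ω ∂μ = ∫ ω, M ω ∂μ) (hfint : Integrable f μ) (hMint : Integrable M μ)
    (hent : Integrable (fun ω => f ω * Real.log (f ω / M ω)) μ) :
    0 ≤ ∫ ω, f ω * Real.log (f ω / M ω) ∂μ := by
  have hmono := integral_mono_ae (f := fun ω => f ω - M ω) (hfint.sub hMint) hent <| by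
    filter_upwards [hMpos, hf0] with ω hM hf using Real.sub_le_mul_log_div hf hM
  rwa [integral_sub hfint hMint, hfM, sub_self] at hmono

theorem integral_mul_log_div_le (hMpos : ∀ᵐ ω ∂μ, 0 < M ω) (hf0 : ∀ᵐ ω ∂μ, 0 ≤ f ω)
    (hfint : Integrable f μ) (hL2 : Integrable (fun ω => f ω ^ 2 / M ω) μ)
    (hent : Integrable (fun ω => f ω * Real.log (f ω / M ω)) μ) :
    ∫ ω, f ω * Real.log (f ω / M ω) ∂μ ≤ ∫ ω, f ω ^ 2 / M ω ∂μ - ∫ ω, f ω ∂μ := by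
  rw [← integral_sub hL2 hfint]
  refine integral_mono_ae (g := fun ω => f ω ^ 2 / M ω - f ω) hent (hL2.sub hfint) ?_
  filter_upwards [hMpos, hf0] with ω hM hf using Real.mul_log_div_le hf hM

theorem integral_div_sqrt_sq (hMpos : ∀ᵐ ω ∂μ, 0 < M ω) :
    ∫ ω, (f ω / √(M ω)) ^ 2 ∂μ = ∫ ω, f ω ^ 2 / M ω ∂μ := by
  refine integral_congr_ae ?_
  filter_upwards [hMpos] with ω hM
  rw [div_pow, Real.sq_sqrt hM.le]

theorem integral_div_sqrt_sub_sqrt_sq (hMpos : ∀ᵐ ω ∂μ, 0 < M ω) (hfint : Integrable f μ)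
    (hMint : Integrable M μ) (hL2 : Integrable (fun ω => f ω ^ 2 / M ω) μ) :
    ∫ ω, (f ω / √(M ω) - √(M ω)) ^ 2 ∂μ =
      ∫ ω, f ω ^ 2 / M ω ∂μ - 2 * ∫ ω, f ω ∂μ + ∫ ω, M ω ∂μ := by
  have hexpand : ∀ᵐ ω ∂μ, (f ω / √(M ω) - √(M ω)) ^ 2 = f ω ^ 2 / M ω - 2 * f ω + M ω := by
    filter_upwards [hMpos] with ω hM
    have hs : √(M ω) ≠ 0 := (Real.sqrt_pos.mpr hM).ne'
    field_simp
    rw [Real.sq_sqrt hM.le]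
    ring
  rw [integral_congr_ae hexpand,
    integral_add (f := fun ω => f ω ^ 2 / M ω - 2 * f ω) (hL2.sub (hfint.const_mul 2)) hMint,
    integral_sub hL2 (hfint.const_mul 2), integral_const_mul]

end RelativeEntropy

theorem stmt15_general {Ω : Type*} [MeasurableSpace Ω] (μ : Measure Ω) (M f : Ω → ℝ)
    (hMpos : ∀ᵐ ω ∂μ, 0 < M ω) (hM1 : ∫ ω, M ω ∂μ = 1)
    (hf0 : ∀ᵐ ω ∂μ, 0 ≤ f ω) (hf1 : ∫ ω, f ω ∂μ = 1)
    (hfint : Integrable f μ) (hMint : Integrable M μ)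
    (hL2 : Integrable (fun ω => (f ω) ^ 2 / M ω) μ)
    (hent : Integrable (fun ω => f ω * Real.log (f ω / M ω)) μ) :
    0 ≤ ∫ ω, f ω * Real.log (f ω / M ω) ∂μ ∧
    ∫ ω, f ω * Real.log (f ω / M ω) ∂μ ≤
      Real.sqrt (∫ ω, (f ω / Real.sqrt (M ω)) ^ 2 ∂μ) *
      Real.sqrt (∫ ω, (f ω / Real.sqrt (M ω) - Real.sqrt (M ω)) ^ 2 ∂μ) := by
  refine ⟨integral_mul_log_div_nonneg hMpos hf0 (hf1.trans hM1.symm) hfint hMint hent, ?_⟩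
  have hupper := integral_mul_log_div_le hMpos hf0 hfint hL2 hent
  have hdist := integral_div_sqrt_sub_sqrt_sq hMpos hfint hMint hL2
  have hdist_nonneg : 0 ≤ ∫ ω, (f ω / √(M ω) - √(M ω)) ^ 2 ∂μ :=
    integral_nonneg fun ω => sq_nonneg _
  rw [hf1] at hupper
  rw [hf1, hM1] at hdist
  rw [integral_div_sqrt_sq hMpos]
  exact Real.le_sqrt_mul_sqrt_of_le (by linarith) hdist_nonneg (by linarith)

/-- Bounds on the relative entropy: `0 ≤ H(f|M) ≤ ‖f/M^{1/2}‖ ‖f/M^{1/2} − M^{1/2}‖`. -/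
theorem stmt15 {Ω : Type*} [MeasurableSpace Ω] (μ : Measure Ω) (M f : Ω → ℝ)
    (hMmeas : Measurable M) (hfmeas : Measurable f)
    (hMpos : ∀ᵐ ω ∂μ, 0 < M ω) (hM1 : ∫ ω, M ω ∂μ = 1)
    (hf0 : ∀ᵐ ω ∂μ, 0 ≤ f ω) (hf1 : ∫ ω, f ω ∂μ = 1)
    (hfint : Integrable f μ) (hMint : Integrable M μ)
    (hL2 : Integrable (fun ω => (f ω) ^ 2 / M ω) μ)
    (hent : Integrable (fun ω => f ω * Real.log (f ω / M ω)) μ) :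
    0 ≤ ∫ ω, f ω * Real.log (f ω / M ω) ∂μ ∧
    ∫ ω, f ω * Real.log (f ω / M ω) ∂μ ≤
      Real.sqrt (∫ ω, (f ω / Real.sqrt (M ω)) ^ 2 ∂μ) *
      Real.sqrt (∫ ω, (f ω / Real.sqrt (M ω) - Real.sqrt (M ω)) ^ 2 ∂μ) :=
  stmt15_general μ M f hMpos hM1 hf0 hf1 hfint hMint hL2 hent
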